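/- Suppose for a single distribution P, an optimal f* and all f in a model, the u-Bernstein condition holds: E[(ℓ_f - ℓ_{f*})²] - (E[ℓ_f - ℓ_{f*}])² ≤ u(E[ℓ_f - ℓ_{f*}]), where u is nondecreasing, positive on (0,∞), with u(x)/x nonincreasing and losses take values in [0,a]. Fix b > 0 and set c = 1/κ(2ba) where κ(x)=(e^x-x-1)/x². Then for every ε > 0 and η = min(cε/u(ε), b), every f with E[ℓ_f - ℓ_{f*}] ≥ 0 satisfies E[e^{η(ℓ_{f*} - ℓ_f)}] ≤ e^{ηε}. -/

import Mathlib

/-!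
Put `X = ℓ_f - ℓ_{f*}`, so `|X| ≤ a` and `η |X - E X| ≤ 2ba`. The Taylor bound
`e^y ≤ 1 + y + κ(2ba) y²` for `|y| ≤ 2ba` gives `E e^{-ηX} ≤ exp (η (κ(2ba) η Var X - E X))`.
The Bernstein condition bounds `Var X` by `u (E X)`, and for `λ ≤ ε / u ε` one has
`λ u (E X) ≤ ε + E X`: by monotonicity of `u` when `E X ≤ ε`, by monotonicity of `u x / x`
otherwise. The choice of `η` makes `λ = κ(2ba) η` admissible, so the exponent is at most `η ε`.
-/

open MeasureTheory ProbabilityTheory Real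

noncomputable def kappa (x : ℝ) : ℝ := (exp x - x - 1) / x ^ 2

lemma kappa_pos {x : ℝ} (hx : x ≠ 0) : 0 < kappa x :=
  div_pos (by linarith [add_one_lt_exp hx]) (by positivity)

lemma hasSum_exp_sub_sub_one (x : ℝ) :
    HasSum (fun n : ℕ => x ^ (n + 2) / (n + 2).factorial) (exp x - x - 1) := by
  have h := (hasSum_nat_add_iff' 2).mpr (NormedSpace.expSeries_div_hasSum_exp x)
  simpa [Finset.sum_range_succ, ← exp_eq_exp_ℝ, sub_sub, add_comm] using h

-- Compare Taylor series termwise: `y ^ (n + 2) ≤ y ^ 2 * t ^ n` when `|y| ≤ t`.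
lemma exp_le_one_add_add_kappa_mul_sq {t y : ℝ} (ht : 0 < t) (hy : |y| ≤ t) :
    exp y ≤ 1 + y + kappa t * y ^ 2 := by
  have hterm (n : ℕ) : y ^ (n + 2) / (n + 2).factorial
      ≤ y ^ 2 / t ^ 2 * (t ^ (n + 2) / (n + 2).factorial) := by
    have hpow : y ^ (n + 2) ≤ y ^ 2 * t ^ n :=
      calc y ^ (n + 2) ≤ |y| ^ (n + 2) := by rw [← abs_pow]; exact le_abs_self _
        _ = y ^ 2 * |y| ^ n := by rw [pow_add, sq_abs, mul_comm]
        _ ≤ y ^ 2 * t ^ n := by gcongr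
    have hrescale : y ^ 2 / t ^ 2 * (t ^ (n + 2) / (n + 2).factorial)
        = y ^ 2 * t ^ n / (n + 2).factorial := by
      field_simp
      ring
    rw [hrescale]
    gcongr
  have := hasSum_le hterm (hasSum_exp_sub_sub_one y) ((hasSum_exp_sub_sub_one t).mul_left _)
  rw [kappa]
  linarith [show y ^ 2 / t ^ 2 * (exp t - t - 1) = (exp t - t - 1) / t ^ 2 * y ^ 2 by ring]

lemma mul_apply_le_add_of_antitoneOn_div {u : ℝ → ℝ} (hmono : Monotone u)
    (hratio : AntitoneOn (fun x => u x / x) (Set.Ioi 0)) {ε μ η : ℝ} (hε : 0 < ε)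
    (huε : 0 < u ε) (hμ : 0 ≤ μ) (hη0 : 0 ≤ η) (hη : η ≤ ε / u ε) :
    η * u μ ≤ ε + μ := by
  have hηu : η * u ε ≤ ε := (le_div_iff₀ huε).mp hη
  rcases le_or_gt μ ε with hle | hlt
  · nlinarith [hmono hle]
  · have hμ0 : 0 < μ := hε.trans hlt
    have hr : u μ / μ ≤ u ε / ε := hratio hε hμ0 hlt.le
    rw [div_le_div_iff₀ hμ0 hε] at hr
    nlinarith

section

variable {Ω : Type*} [MeasurableSpace Ω] {P : Measure Ω} [IsProbabilityMeasure P]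
  {X : Ω → ℝ} {a η t : ℝ}

lemma integral_exp_neg_mul_centered_le (hX : AEMeasurable X P) (hXa : ∀ᵐ z ∂P, |X z| ≤ a)
    (hη : 0 ≤ η) (ht : 0 < t) (hηt : 2 * η * a ≤ t) :
    ∫ z, exp (-η * (X z - P[X])) ∂P ≤ 1 + kappa t * η ^ 2 * Var[X; P] := by
  have hmean : |P[X]| ≤ a := by
    simpa using norm_integral_le_of_norm_le_const (μ := P) (f := X) (by simpa using hXa)
  have hL2 : MemLp X 2 P :=
    memLp_of_bounded (hXa.mono fun z hz => abs_le.mp hz) hX.aestronglyMeasurable 2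
  have hX1 : Integrable X P := hL2.integrable one_le_two
  have hsq : Integrable (fun z => (X z - P[X]) ^ 2) P :=
    (hL2.sub (memLp_const _)).integrable_sq
  have hpoint : ∀ᵐ z ∂P, exp (-η * (X z - P[X]))
      ≤ 1 + -η * (X z - P[X]) + kappa t * η ^ 2 * (X z - P[X]) ^ 2 := by
    filter_upwards [hXa] with z hz
    have hsmall : |-η * (X z - P[X])| ≤ t := by
      rw [abs_mul, abs_neg, abs_of_nonneg hη]
      have : |X z - P[X]| ≤ 2 * a := by
        rw [abs_le] at *
        constructor <;> linarith
      nlinarith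
    linarith [exp_le_one_add_add_kappa_mul_sq ht hsmall,
      show kappa t * (-η * (X z - P[X])) ^ 2 = kappa t * η ^ 2 * (X z - P[X]) ^ 2 by ring]
  calc ∫ z, exp (-η * (X z - P[X])) ∂P
      ≤ ∫ z, (1 + -η * (X z - P[X]) + kappa t * η ^ 2 * (X z - P[X]) ^ 2) ∂P :=
        integral_mono_of_nonneg (ae_of_all _ fun z => (exp_pos _).le)
          (by fun_prop) hpoint
    _ = 1 + kappa t * η ^ 2 * Var[X; P] := by
        rw [integral_add (by fun_prop) (hsq.const_mul _), integral_add (by fun_prop) (by fun_prop),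
          integral_const_mul, integral_const_mul, integral_sub hX1 (integrable_const _),
          ← variance_eq_integral hX]
        simp

lemma integral_exp_neg_mul_le (hX : AEMeasurable X P) (hXa : ∀ᵐ z ∂P, |X z| ≤ a)
    (hη : 0 ≤ η) (ht : 0 < t) (hηt : 2 * η * a ≤ t) :
    ∫ z, exp (-η * X z) ∂P ≤ exp (η * (kappa t * η * Var[X; P] - P[X])) :=
  calc ∫ z, exp (-η * X z) ∂P = exp (-η * P[X]) * ∫ z, exp (-η * (X z - P[X])) ∂P := by
        rw [← integral_const_mul]
        simp only [← exp_add]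
        ring_nf
    _ ≤ exp (-η * P[X]) * exp (kappa t * η ^ 2 * Var[X; P]) := by
        gcongr
        exact (integral_exp_neg_mul_centered_le hX hXa hη ht hηt).trans
          (by linarith [add_one_le_exp (kappa t * η ^ 2 * Var[X; P])])
    _ = exp (η * (kappa t * η * Var[X; P] - P[X])) := by
        rw [← exp_add]
        ring_nf

end

/-- Bernstein implies central: under the `u`-Bernstein condition with losses in `[0,a]`,
for every `ε > 0` and `η = min(c·ε/u(ε), b)` with `c = 1/κ(2ba)`, every `f` with
nonnegative excess risk satisfies `E[e^{η(ℓ_{f*} - ℓ_f)}] ≤ e^{ηε}`. -/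
theorem stmt10 {Ω ι : Type*} [MeasurableSpace Ω] (P : Measure Ω) [IsProbabilityMeasure P]
    (L : ι → Ω → ℝ) (fstar : ι) (a b : ℝ) (ha : 0 < a) (hb : 0 < b)
    (hmeas : ∀ f, Measurable (L f)) (hrange : ∀ f z, L f z ∈ Set.Icc 0 a)
    (u : ℝ → ℝ) (hu_mono : Monotone u) (hu_pos : ∀ x > 0, 0 < u x)
    (hu_ratio : AntitoneOn (fun x => u x / x) (Set.Ioi 0))
    (hbern : ∀ f, (∫ z, (L f z - L fstar z)^2 ∂P) - (∫ z, (L f z - L fstar z) ∂P)^2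
      ≤ u (∫ z, (L f z - L fstar z) ∂P))
    (c : ℝ) (hc : c = 1 / ((Real.exp (2*b*a) - 2*b*a - 1) / (2*b*a)^2)) :
    ∀ ε > 0, ∀ f, 0 ≤ ∫ z, (L f z - L fstar z) ∂P →
      ∀ η, η = min (c * ε / u ε) b →
        ∫ z, Real.exp (η * (L fstar z - L f z)) ∂P ≤ Real.exp (η * ε) := by
  rintro ε hε f hmean η rfl
  set X : Ω → ℝ := fun z => L f z - L fstar z
  set η := min (c * ε / u ε) b
  have ht : 0 < 2 * b * a := by positivity
  have hκ : 0 < kappa (2 * b * a) := kappa_pos ht.ne'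
  have huε : 0 < u ε := hu_pos ε hε
  have hη : 0 ≤ η := le_min (by rw [hc]; positivity) hb.le
  have hXa : ∀ z, |X z| ≤ a := fun z => by
    obtain ⟨h₁, h₂⟩ := hrange f z
    obtain ⟨h₃, h₄⟩ := hrange fstar z
    exact abs_le.mpr ⟨by linarith, by linarith⟩
  have hX : Measurable X := (hmeas f).sub (hmeas fstar)
  have hvar : Var[X; P] ≤ u P[X] := by
    rw [variance_eq_sub (memLp_of_bounded (ae_of_all _ fun z => abs_le.mp (hXa z))
      hX.aestronglyMeasurable 2)]
    exact hbern f
  have hκη : kappa (2 * b * a) * η ≤ ε / u ε := by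
    have hc' : c = (kappa (2 * b * a))⁻¹ := by rw [hc, one_div]; rfl
    calc kappa (2 * b * a) * η ≤ kappa (2 * b * a) * (c * ε / u ε) := by
          gcongr
          exact min_le_left _ _
      _ = ε / u ε := by rw [hc']; field_simp
  have hexponent : kappa (2 * b * a) * η * Var[X; P] ≤ ε + P[X] :=
    (mul_le_mul_of_nonneg_left hvar (by positivity)).trans
      (mul_apply_le_add_of_antitoneOn_div hu_mono hu_ratio hε huε hmean (by positivity) hκη)
  calc ∫ z, exp (η * (L fstar z - L f z)) ∂P = ∫ z, exp (-η * X z) ∂P := by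
        simp only [X, neg_mul_comm, neg_sub]
    _ ≤ exp (η * (kappa (2 * b * a) * η * Var[X; P] - P[X])) :=
        integral_exp_neg_mul_le hX.aemeasurable (ae_of_all _ hXa) hη ht
          (by gcongr; exact min_le_right _ _)
    _ ≤ exp (η * ε) := by
        gcongr
        linarith
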